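/- For all n ≥ 0 and r ≥ 1, Σ_{k≥0} p̄(n − r·T_k) = σ_r mex̄(n), where T_k = k(k+1)/2 is the k-th triangular number, p̄ denotes the overpartition counting function (with p̄(m) = 0 for m < 0), and σ_r mex̄(n) is the sum of the least r-gaps over all overpartitions of n. -/

import Mathlib

structure Overpartition (n : ℕ) where
  parts : Multiset ℕ              -- non-overlined parts
  overlined : Finset ℕ            -- overlined parts (distinct sizes)
  parts_pos : ∀ i ∈ parts, 0 < i
  overlined_pos : ∀ i ∈ overlined, 0 < i
  sum_eq : parts.sum + ∑ i ∈ overlined, i = n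

/-- Minimal excludant of an overpartition: the least positive integer not among
the non-overlined parts. -/
noncomputable def Overpartition.mex {n : ℕ} (π : Overpartition n) : ℕ :=
  sInf {m : ℕ | 0 < m ∧ m ∉ π.parts}

/-- Least `r`-gap: the least positive integer occurring fewer than `r` times among
the non-overlined parts. -/
noncomputable def Overpartition.rgap {n : ℕ} (r : ℕ) (π : Overpartition n) : ℕ :=
  sInf {m : ℕ | 0 < m ∧ π.parts.count m < r}

/-- `σmex̄(n)`: sum of minimal excludants over all overpartitions of `n`. -/
noncomputable def sigmaMex (n : ℕ) : ℕ := ∑ᶠ π : Overpartition n, π.mex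

/-- `σ_r mex̄(n)`: sum of least `r`-gaps over all overpartitions of `n`. -/
noncomputable def sigmaRMex (r n : ℕ) : ℕ := ∑ᶠ π : Overpartition n, π.rgap r

/-- `p̄(n)`: the number of overpartitions of `n`. -/
noncomputable def pbar (n : ℕ) : ℕ := Nat.card (Overpartition n)

/-!
For `r ≥ 1` the least `r`-gap of `π` exceeds `j` exactly when the non-overlined parts contain
`r • {1, …, j}`, a multiset of sum `r T_j`; and since `mex̄_r(π) ≤ n + 1`,
`mex̄_r(π) = #{j ≤ n | r • {1, …, j} ≤ π.parts}`. Exchanging the sums,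
`σ_r mex̄(n) = Σ_{j ≤ n} #{π | r • {1, …, j} ≤ π.parts}`, and deleting `r • {1, …, j}` from the
non-overlined parts is a bijection from these overpartitions onto those of `n - r T_j`.
-/

theorem Multiset.sum_Icc_one_id (j : ℕ) : (Multiset.Icc 1 j).sum = j * (j + 1) / 2 := by
  have hgauss := Finset.sum_range_id_mul_two (j + 1)
  rw [← Nat.Ico_zero_eq_range, Finset.sum_eq_sum_Ico_succ_bot (by omega : 0 < j + 1),
    Finset.Ico_add_one_right_eq_Icc, zero_add, zero_add, Nat.add_sub_cancel] at hgauss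
  have hfinset : (Multiset.Icc 1 j).sum = ∑ i ∈ Finset.Icc 1 j, i := by
    rw [Finset.sum, Multiset.map_id']; rfl
  rw [hfinset, Nat.mul_comm j, ← hgauss, Nat.mul_div_cancel _ two_pos]

theorem Multiset.nsmul_Icc_one_le_iff {r j : ℕ} {s : Multiset ℕ} :
    r • Multiset.Icc 1 j ≤ s ↔ ∀ m, 0 < m → m ≤ j → r ≤ s.count m := by
  classical
  simp only [Multiset.le_iff_count, Multiset.count_nsmul,
    Multiset.count_eq_of_nodup Multiset.nodup_Icc, Multiset.mem_Icc]
  refine ⟨fun h m hm hmj => by simpa [if_pos (⟨hm, hmj⟩ : 1 ≤ m ∧ m ≤ j)] using h m,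
    fun h m => ?_⟩
  split_ifs with hm
  · simpa using h m hm.1 hm.2
  · simp

theorem Multiset.sum_le_sum_of_le {α : Type*} [AddCommMonoid α] [PartialOrder α]
    [CanonicallyOrderedAdd α] {s t : Multiset α} (h : s ≤ t) : s.sum ≤ t.sum := by
  obtain ⟨u, rfl⟩ := Multiset.le_iff_exists_add.1 h
  exact Multiset.sum_add s u ▸ le_self_add

theorem le_mul_triangular {r k : ℕ} (hr : 1 ≤ r) : k ≤ r * (k * (k + 1) / 2) :=
  calc k ≤ k * (k + 1) / 2 := by
        rw [Nat.le_div_iff_mul_le two_pos]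
        rcases k with _ | k
        · rfl
        · exact Nat.mul_le_mul_left _ (by omega)
    _ ≤ r * (k * (k + 1) / 2) := Nat.le_mul_of_pos_left _ hr

theorem Finset.sum_range_boole_lt {g N : ℕ} (hg : g ≤ N) :
    (∑ j ∈ Finset.range N, if j < g then 1 else 0) = g := by
  rw [Finset.sum_boole, Nat.cast_id,
    show (Finset.range N).filter (· < g) = Finset.range g by ext; simp; omega,
    Finset.card_range]

namespace Overpartition

variable {n : ℕ}

theorem ext {π σ : Overpartition n} (hparts : π.parts = σ.parts)
    (hoverlined : π.overlined = σ.overlined) : π = σ := by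
  cases π; cases σ; simp_all

theorem sum_parts_le (π : Overpartition n) : π.parts.sum ≤ n := by
  have := π.sum_eq; omega

theorem le_of_mem_parts (π : Overpartition n) {m : ℕ} (hm : m ∈ π.parts) : m ≤ n :=
  (Multiset.le_sum_of_mem hm).trans π.sum_parts_le

theorem overlined_subset_range (π : Overpartition n) : π.overlined ⊆ Finset.range (n + 1) :=
  fun i hi => Finset.mem_range_succ_iff.2 <|
    (Finset.single_le_sum (fun j _ => Nat.zero_le j) hi).trans (by have := π.sum_eq; omega)

def partsPartition (π : Overpartition n) : Σ m : Fin (n + 1), Nat.Partition m :=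
  ⟨⟨π.parts.sum, Nat.lt_succ_of_le π.sum_parts_le⟩, ⟨π.parts, π.parts_pos _, rfl⟩⟩

instance : Finite (Overpartition n) :=
  Finite.of_injective
    (fun π => (π.partsPartition,
      (⟨π.overlined, Finset.mem_powerset.2 π.overlined_subset_range⟩ :
        (Finset.range (n + 1)).powerset)))
    fun _ _ h => ext (congrArg (fun x => x.1.2.parts) h) (congrArg (fun x => x.2.1) h)

theorem succ_mem_rgap_set {r : ℕ} (hr : 1 ≤ r) (π : Overpartition n) :
    n + 1 ∈ {m : ℕ | 0 < m ∧ π.parts.count m < r} := by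
  refine ⟨n.succ_pos, ?_⟩
  rw [Multiset.count_eq_zero.2 fun h => (π.le_of_mem_parts h).not_gt n.lt_succ_self]
  exact hr

theorem rgap_le {r : ℕ} (hr : 1 ≤ r) (π : Overpartition n) : π.rgap r ≤ n + 1 :=
  Nat.sInf_le (π.succ_mem_rgap_set hr)

theorem lt_rgap_iff {r j : ℕ} (hr : 1 ≤ r) (π : Overpartition n) :
    j < π.rgap r ↔ ∀ m, 0 < m → m ≤ j → r ≤ π.parts.count m := by
  refine ⟨fun hj m hm hmj => ?_, fun h => ?_⟩
  · exact not_lt.1 fun hcount => Nat.notMem_of_lt_sInf (hmj.trans_lt hj) ⟨hm, hcount⟩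
  · obtain ⟨hpos, hcount⟩ := Nat.sInf_mem ⟨_, π.succ_mem_rgap_set hr⟩
    by_contra! hj
    exact (h _ hpos hj).not_gt hcount

def removeParts (s : Multiset ℕ) (hs : ∀ i ∈ s, 0 < i) (hsn : s.sum ≤ n) :
    {π : Overpartition n // s ≤ π.parts} ≃ Overpartition (n - s.sum) where
  toFun π :=
    { parts := π.1.parts - s
      overlined := π.1.overlined
      parts_pos := fun i hi => π.1.parts_pos i (Multiset.mem_of_le (Multiset.sub_le_self _ _) hi)
      overlined_pos := π.1.overlined_pos
      sum_eq := by
        have hsplit : (π.1.parts - s).sum + s.sum = π.1.parts.sum := by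
          rw [← Multiset.sum_add, tsub_add_cancel_of_le π.2]
        have := π.1.sum_eq
        omega }
  invFun τ :=
    ⟨{ parts := τ.parts + s
       overlined := τ.overlined
       parts_pos := fun i hi => (Multiset.mem_add.1 hi).elim (τ.parts_pos i) (hs i)
       overlined_pos := τ.overlined_pos
       sum_eq := by rw [Multiset.sum_add]; have := τ.sum_eq; omega },
     Multiset.le_add_left _ _⟩
  left_inv π := Subtype.ext (ext (tsub_add_cancel_of_le π.2) rfl)
  right_inv τ := ext (add_tsub_cancel_right _ _) rfl

theorem card_subtype_le_parts (s : Multiset ℕ) (hs : ∀ i ∈ s, 0 < i) :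
    Nat.card {π : Overpartition n // s ≤ π.parts} =
      if s.sum ≤ n then pbar (n - s.sum) else 0 := by
  split_ifs with hsn
  · exact Nat.card_congr (removeParts s hs hsn)
  · have : IsEmpty {π : Overpartition n // s ≤ π.parts} :=
      ⟨fun π => hsn ((Multiset.sum_le_sum_of_le π.2).trans π.1.sum_parts_le)⟩
    exact Nat.card_of_isEmpty

end Overpartition

theorem sigmaRMex_eq_sum_card {r : ℕ} (hr : 1 ≤ r) (n : ℕ) :
    sigmaRMex r n = ∑ j ∈ Finset.range (n + 1),
      Nat.card {π : Overpartition n // r • Multiset.Icc 1 j ≤ π.parts} := by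
  classical
  have := Fintype.ofFinite (Overpartition n)
  have hrgap (π : Overpartition n) : π.rgap r = ∑ j ∈ Finset.range (n + 1),
      if r • Multiset.Icc 1 j ≤ π.parts then 1 else 0 := by
    simp_rw [Multiset.nsmul_Icc_one_le_iff, ← π.lt_rgap_iff hr]
    exact (Finset.sum_range_boole_lt (π.rgap_le hr)).symm
  rw [sigmaRMex, finsum_eq_sum_of_fintype, Finset.sum_congr rfl fun π _ => hrgap π,
    Finset.sum_comm]
  simp_rw [Finset.sum_boole, Nat.card_eq_fintype_card, Fintype.card_subtype, Nat.cast_id]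

/-- For n ≥ 0 and r ≥ 1, Σ_{k≥0} p̄(n − r·T_k) = σ_r mex̄(n), where the terms with
r·T_k > n vanish. -/
theorem stmt6 (n r : ℕ) (hr : 1 ≤ r) :
    (∑ᶠ k : ℕ, if r * (k * (k + 1) / 2) ≤ n then pbar (n - r * (k * (k + 1) / 2)) else 0)
      = sigmaRMex r n := by
  have hsupp : Function.support (fun k : ℕ =>
      if r * (k * (k + 1) / 2) ≤ n then pbar (n - r * (k * (k + 1) / 2)) else 0)
      ⊆ Finset.range (n + 1) := fun k hk => by
    by_contra hkn
    simp only [Finset.coe_range, Set.mem_Iio, not_lt] at hkn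
    exact hk (if_neg (by have := le_mul_triangular (k := k) hr; omega))
  rw [finsum_eq_sum_of_support_subset _ hsupp, sigmaRMex_eq_sum_card hr]
  refine Finset.sum_congr rfl fun k _ => ?_
  rw [Overpartition.card_subtype_le_parts _ fun i hi => (Multiset.mem_Icc.1
    (Multiset.mem_of_mem_nsmul hi)).1, Multiset.sum_nsmul, Multiset.sum_Icc_one_id, smul_eq_mul]
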